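/- Define κ = (Z − p)/(p(1−p)) with p = P(Z=1) ∈ (0,1). Under the stochastic compliance class IV assumptions, E[κ·(1−D)·g(Y)] = −E[g(Y(0))·w(U)], and hence if E[κ·D] ≠ 0, E[κ·g(Y)]/E[κ·D] = E[(g(Y(1)) − g(Y(0)))·w(U)]/E[w(U)]. -/

import Mathlib

open Finset
open scoped Classical

/-- Probability of an event `A` under mass function `p` on a finite sample space. -/
noncomputable def prb {Ω : Type*} [Fintype Ω] (p : Ω → ℝ) (A : Ω → Prop) : ℝ :=
  ∑ ω, if A ω then p ω else 0

/-- Expectation of a real random variable `X` under mass function `p`. -/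
noncomputable def exv {Ω : Type*} [Fintype Ω] (p : Ω → ℝ) (X : Ω → ℝ) : ℝ :=
  ∑ ω, p ω * X ω

/-- Conditional probability `P(A | B)`. -/
noncomputable def cpr {Ω : Type*} [Fintype Ω] (p : Ω → ℝ) (A B : Ω → Prop) : ℝ :=
  prb p (fun ω => A ω ∧ B ω) / prb p B

/-- Conditional expectation `E[X | B]`. -/
noncomputable def cex {Ω : Type*} [Fintype Ω] (p : Ω → ℝ) (X : Ω → ℝ) (B : Ω → Prop) : ℝ :=
  (∑ ω, if B ω then p ω * X ω else 0) / prb p B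

/-!
Splitting on `Z`, `E[κ X] = E[X; Z = 1] / p - E[X; Z = 0] / (1 - p)` (with `E[X; B]` written
`exvOn p X B` below), and both terms can be computed stratum by stratum of `U`. For
`X = f(Y(1), Y(0))`, independence of `(Y(1), Y(0), U)` from `Z` gives
`E[X; Z = z, U = u] = P(Z = z) E[X; U = u]`, so the two terms cancel and `E[κ X] = 0`.
For `X = D f(Y(1), Y(0))`, conditional independence contributes the extra factor
`P(D = 1 | Z = z, U = u)`, so `E[κ D f] = E[f w(U)]`. Since `g(Y) = D g(Y(1)) + (1 - D) g(Y(0))`,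
both claims are linear combinations of these two identities.
-/

noncomputable def exvOn {Ω : Type*} [Fintype Ω] (p : Ω → ℝ) (X : Ω → ℝ) (B : Ω → Prop) : ℝ :=
  ∑ ω, if B ω then p ω * X ω else 0

section FiniteProbability

variable {Ω ι α : Type*} [Fintype Ω] (p : Ω → ℝ)

lemma prb_congr {A B : Ω → Prop} (h : ∀ ω, A ω ↔ B ω) : prb p A = prb p B := by
  rw [show A = B from funext fun ω => propext (h ω)]

lemma prb_not (hpsum : ∑ ω, p ω = 1) (A : Ω → Prop) :
    prb p (fun ω => ¬A ω) = 1 - prb p A := by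
  rw [← hpsum, prb, prb, eq_sub_iff_add_eq, ← sum_add_distrib]
  exact sum_congr rfl fun ω _ => by by_cases h : A ω <;> simp [h]

lemma prb_and_eq_cpr_mul (A : Ω → Prop) {B : Ω → Prop} (hB : prb p B ≠ 0) :
    prb p (fun ω => A ω ∧ B ω) = cpr p A B * prb p B := by
  rw [cpr, div_mul_cancel₀ _ hB]

lemma exv_add (X X' : Ω → ℝ) : exv p (fun ω => X ω + X' ω) = exv p X + exv p X' := by
  simp only [exv, mul_add, sum_add_distrib]

lemma exv_sub (X X' : Ω → ℝ) : exv p (fun ω => X ω - X' ω) = exv p X - exv p X' := by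
  simp only [exv, mul_sub, sum_sub_distrib]

lemma exvOn_eq_sum_fiber (U : Ω → ι) [Fintype ι] (X : Ω → ℝ) (B : Ω → Prop) :
    exvOn p X B = ∑ u, exvOn p X (fun ω => B ω ∧ U ω = u) := by
  simp only [exvOn]
  rw [sum_comm]
  exact sum_congr rfl fun ω _ => by by_cases h : B ω <;> simp [h]

lemma exv_mul_comp_eq_sum (U : Ω → ι) [Fintype ι] (X : Ω → ℝ) (w : ι → ℝ) :
    exv p (fun ω => X ω * w (U ω)) = ∑ u, exvOn p X (fun ω => U ω = u) * w u := by
  simp only [exv, exvOn, sum_mul]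
  rw [sum_comm]
  exact sum_congr rfl fun ω _ => by simp [mul_assoc]

lemma exvOn_comp_eq_sum (V : Ω → α) (f : α → ℝ) (B : Ω → Prop) :
    exvOn p (fun ω => f (V ω)) B =
      ∑ v ∈ univ.image V, f v * prb p (fun ω => V ω = v ∧ B ω) := by
  rw [exvOn, ← sum_fiberwise_of_maps_to fun ω _ => mem_image_of_mem V (mem_univ ω)]
  refine sum_congr rfl fun v _ => ?_
  rw [prb, mul_sum, sum_filter]
  refine sum_congr rfl fun ω _ => ?_
  by_cases hV : V ω = v <;> by_cases hB : B ω <;> simp [hV, hB, mul_comm]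

lemma exvOn_comp_eq_mul_of_prb_eq_mul (V : Ω → α) (f : α → ℝ) {A B : Ω → Prop} {c : ℝ}
    (h : ∀ v, prb p (fun ω => V ω = v ∧ A ω) = prb p (fun ω => V ω = v ∧ B ω) * c) :
    exvOn p (fun ω => f (V ω)) A = exvOn p (fun ω => f (V ω)) B * c := by
  rw [exvOn_comp_eq_sum, exvOn_comp_eq_sum, sum_mul]
  exact sum_congr rfl fun v _ => by rw [h, mul_assoc]

lemma exvOn_binary_mul {D : Ω → ℝ} (hDbin : ∀ ω, D ω = 0 ∨ D ω = 1) (X : Ω → ℝ)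
    (B : Ω → Prop) : exvOn p (fun ω => D ω * X ω) B = exvOn p X (fun ω => D ω = 1 ∧ B ω) := by
  refine sum_congr rfl fun ω _ => ?_
  rcases hDbin ω with h | h <;> simp [h]

lemma exv_kappa_mul {Z κ : Ω → ℝ} {c : ℝ} (hZbin : ∀ ω, Z ω = 0 ∨ Z ω = 1) (hc0 : c ≠ 0)
    (hc1 : 1 - c ≠ 0) (hκ : ∀ ω, κ ω = (Z ω - c) / (c * (1 - c))) (X : Ω → ℝ) :
    exv p (fun ω => κ ω * X ω) =
      exvOn p X (fun ω => Z ω = 1) / c - exvOn p X (fun ω => Z ω = 0) / (1 - c) := by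
  simp only [exv, exvOn, sum_div, ← sum_sub_distrib]
  refine sum_congr rfl fun ω _ => ?_
  rcases hZbin ω with h | h <;> simp [hκ, h] <;> field_simp

lemma exv_kappa_mul_eq_sum_sub [Fintype ι] {Z κ : Ω → ℝ} {c : ℝ} (U : Ω → ι)
    (hZbin : ∀ ω, Z ω = 0 ∨ Z ω = 1) (hc0 : c ≠ 0) (hc1 : 1 - c ≠ 0)
    (hκ : ∀ ω, κ ω = (Z ω - c) / (c * (1 - c))) {X : Ω → ℝ} {a₁ a₀ : ι → ℝ}
    (h₁ : ∀ u, exvOn p X (fun ω => Z ω = 1 ∧ U ω = u) = c * a₁ u)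
    (h₀ : ∀ u, exvOn p X (fun ω => Z ω = 0 ∧ U ω = u) = (1 - c) * a₀ u) :
    exv p (fun ω => κ ω * X ω) = ∑ u, (a₁ u - a₀ u) := by
  rw [exv_kappa_mul p hZbin hc0 hc1 hκ, exvOn_eq_sum_fiber p U, exvOn_eq_sum_fiber p U,
    sum_div, sum_div, ← sum_sub_distrib]
  refine sum_congr rfl fun u _ => ?_
  rw [h₁, h₀]
  field_simp

end FiniteProbability

section Instrument

variable {Ω ι : Type*} [Fintype Ω] (p : Ω → ℝ)

lemma exvOn_potential_eq_prb_mul {Z Y1 Y0 : Ω → ℝ} {U : Ω → ι}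
    (hindep : ∀ (y1 y0 : ℝ) (u : ι) (z : ℝ),
      prb p (fun ω => Y1 ω = y1 ∧ Y0 ω = y0 ∧ U ω = u ∧ Z ω = z) =
        prb p (fun ω => Y1 ω = y1 ∧ Y0 ω = y0 ∧ U ω = u) * prb p (fun ω => Z ω = z))
    (f : ℝ → ℝ → ℝ) (z : ℝ) (u : ι) :
    exvOn p (fun ω => f (Y1 ω) (Y0 ω)) (fun ω => Z ω = z ∧ U ω = u) =
      prb p (fun ω => Z ω = z) * exvOn p (fun ω => f (Y1 ω) (Y0 ω)) (fun ω => U ω = u) := by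
  rw [mul_comm]
  refine exvOn_comp_eq_mul_of_prb_eq_mul p (fun ω => (Y1 ω, Y0 ω)) (fun v => f v.1 v.2)
    fun v => ?_
  have hpair : ∀ ω, (Y1 ω, Y0 ω) = v ↔ Y1 ω = v.1 ∧ Y0 ω = v.2 := fun ω => Prod.ext_iff
  simp only [hpair, and_assoc]
  rw [← hindep]
  exact prb_congr p fun ω => by tauto

lemma exvOn_treated_potential_eq_mul_cpr {Z D Y1 Y0 : Ω → ℝ} {U : Ω → ι}
    (hDbin : ∀ ω, D ω = 0 ∨ D ω = 1)
    (hcind : ∀ (y1 y0 d z : ℝ) (u : ι),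
      cpr p (fun ω => Y1 ω = y1 ∧ Y0 ω = y0 ∧ D ω = d) (fun ω => Z ω = z ∧ U ω = u) =
        cpr p (fun ω => Y1 ω = y1 ∧ Y0 ω = y0) (fun ω => Z ω = z ∧ U ω = u) *
          cpr p (fun ω => D ω = d) (fun ω => Z ω = z ∧ U ω = u))
    (f : ℝ → ℝ → ℝ) {z : ℝ} {u : ι} (hzu : prb p (fun ω => Z ω = z ∧ U ω = u) ≠ 0) :
    exvOn p (fun ω => D ω * f (Y1 ω) (Y0 ω)) (fun ω => Z ω = z ∧ U ω = u) =
      exvOn p (fun ω => f (Y1 ω) (Y0 ω)) (fun ω => Z ω = z ∧ U ω = u) *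
        cpr p (fun ω => D ω = 1) (fun ω => Z ω = z ∧ U ω = u) := by
  rw [exvOn_binary_mul p hDbin]
  refine exvOn_comp_eq_mul_of_prb_eq_mul p (fun ω => (Y1 ω, Y0 ω)) (fun v => f v.1 v.2)
    fun v => ?_
  have hpair : ∀ ω, (Y1 ω, Y0 ω) = v ↔ Y1 ω = v.1 ∧ Y0 ω = v.2 := fun ω => Prod.ext_iff
  calc prb p (fun ω => (Y1 ω, Y0 ω) = v ∧ D ω = 1 ∧ Z ω = z ∧ U ω = u)
      = prb p (fun ω => (Y1 ω = v.1 ∧ Y0 ω = v.2 ∧ D ω = 1) ∧ Z ω = z ∧ U ω = u) := by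
        simp only [hpair, and_assoc]
    _ = prb p (fun ω => (Y1 ω = v.1 ∧ Y0 ω = v.2) ∧ Z ω = z ∧ U ω = u) *
          cpr p (fun ω => D ω = 1) (fun ω => Z ω = z ∧ U ω = u) := by
        rw [prb_and_eq_cpr_mul p _ hzu, hcind, prb_and_eq_cpr_mul p _ hzu]
        ring
    _ = prb p (fun ω => (Y1 ω, Y0 ω) = v ∧ Z ω = z ∧ U ω = u) *
          cpr p (fun ω => D ω = 1) (fun ω => Z ω = z ∧ U ω = u) := by
        simp only [hpair]

variable [Fintype ι] {Z Y1 Y0 κ : Ω → ℝ} {U : Ω → ι} {c : ℝ}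

lemma exv_kappa_mul_potential_eq_zero (hZbin : ∀ ω, Z ω = 0 ∨ Z ω = 1) (hc0 : c ≠ 0)
    (hc1 : 1 - c ≠ 0) (hκ : ∀ ω, κ ω = (Z ω - c) / (c * (1 - c)))
    (hZ1 : prb p (fun ω => Z ω = 1) = c) (hZ0 : prb p (fun ω => Z ω = 0) = 1 - c)
    (hindep : ∀ (y1 y0 : ℝ) (u : ι) (z : ℝ),
      prb p (fun ω => Y1 ω = y1 ∧ Y0 ω = y0 ∧ U ω = u ∧ Z ω = z) =
        prb p (fun ω => Y1 ω = y1 ∧ Y0 ω = y0 ∧ U ω = u) * prb p (fun ω => Z ω = z))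
    (f : ℝ → ℝ → ℝ) : exv p (fun ω => κ ω * f (Y1 ω) (Y0 ω)) = 0 := by
  have indep := exvOn_potential_eq_prb_mul p hindep f
  rw [exv_kappa_mul_eq_sum_sub p U hZbin hc0 hc1 hκ (fun u => by rw [indep, hZ1])
    (fun u => by rw [indep, hZ0])]
  simp

lemma exv_kappa_mul_treated_potential {D : Ω → ℝ} {w : ι → ℝ}
    (hZbin : ∀ ω, Z ω = 0 ∨ Z ω = 1) (hDbin : ∀ ω, D ω = 0 ∨ D ω = 1) (hc0 : c ≠ 0)
    (hc1 : 1 - c ≠ 0) (hκ : ∀ ω, κ ω = (Z ω - c) / (c * (1 - c)))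
    (hZ1 : prb p (fun ω => Z ω = 1) = c) (hZ0 : prb p (fun ω => Z ω = 0) = 1 - c)
    (hpos : ∀ (z : ℝ) (u : ι), (z = 0 ∨ z = 1) → 0 < prb p (fun ω => Z ω = z ∧ U ω = u))
    (hindep : ∀ (y1 y0 : ℝ) (u : ι) (z : ℝ),
      prb p (fun ω => Y1 ω = y1 ∧ Y0 ω = y0 ∧ U ω = u ∧ Z ω = z) =
        prb p (fun ω => Y1 ω = y1 ∧ Y0 ω = y0 ∧ U ω = u) * prb p (fun ω => Z ω = z))
    (hcind : ∀ (y1 y0 d z : ℝ) (u : ι),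
      cpr p (fun ω => Y1 ω = y1 ∧ Y0 ω = y0 ∧ D ω = d) (fun ω => Z ω = z ∧ U ω = u) =
        cpr p (fun ω => Y1 ω = y1 ∧ Y0 ω = y0) (fun ω => Z ω = z ∧ U ω = u) *
          cpr p (fun ω => D ω = d) (fun ω => Z ω = z ∧ U ω = u))
    (hw : ∀ u, w u = cpr p (fun ω => D ω = 1) (fun ω => Z ω = 1 ∧ U ω = u) -
                    cpr p (fun ω => D ω = 1) (fun ω => Z ω = 0 ∧ U ω = u))
    (f : ℝ → ℝ → ℝ) :
    exv p (fun ω => κ ω * (D ω * f (Y1 ω) (Y0 ω))) =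
      exv p (fun ω => f (Y1 ω) (Y0 ω) * w (U ω)) := by
  have indep := exvOn_potential_eq_prb_mul p hindep f
  have cind (z : ℝ) (hz : z = 0 ∨ z = 1) (u : ι) :=
    exvOn_treated_potential_eq_mul_cpr p hDbin hcind f (hpos z u hz).ne'
  rw [exv_kappa_mul_eq_sum_sub p U hZbin hc0 hc1 hκ
    (fun u => by rw [cind 1 (.inr rfl), indep, hZ1, mul_assoc])
    (fun u => by rw [cind 0 (.inl rfl), indep, hZ0, mul_assoc]), exv_mul_comp_eq_sum p U]
  simp_rw [hw, mul_sub]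

end Instrument

lemma comp_binary_mix (g : ℝ → ℝ) {d : ℝ} (hd : d = 0 ∨ d = 1) (a b : ℝ) :
    g (d * a + (1 - d) * b) = d * g a + (1 - d) * g b := by
  rcases hd with rfl | rfl <;> simp

theorem stmt6_general {Ω ι : Type*} [Fintype Ω] [Fintype ι]
    (p : Ω → ℝ) (hpsum : ∑ ω, p ω = 1)
    (Z D Y Y1 Y0 : Ω → ℝ) (U : Ω → ι)
    (hZbin : ∀ ω, Z ω = 0 ∨ Z ω = 1) (hDbin : ∀ ω, D ω = 0 ∨ D ω = 1)
    (hYobs : ∀ ω, Y ω = D ω * Y1 ω + (1 - D ω) * Y0 ω)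
    (hpos : ∀ (z : ℝ) (u : ι), (z = 0 ∨ z = 1) →
      0 < prb p (fun ω => Z ω = z ∧ U ω = u))
    (hindep : ∀ (y1 y0 : ℝ) (u : ι) (z : ℝ),
      prb p (fun ω => Y1 ω = y1 ∧ Y0 ω = y0 ∧ U ω = u ∧ Z ω = z) =
        prb p (fun ω => Y1 ω = y1 ∧ Y0 ω = y0 ∧ U ω = u) * prb p (fun ω => Z ω = z))
    (hcind : ∀ (y1 y0 d z : ℝ) (u : ι),
      cpr p (fun ω => Y1 ω = y1 ∧ Y0 ω = y0 ∧ D ω = d) (fun ω => Z ω = z ∧ U ω = u) =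
        cpr p (fun ω => Y1 ω = y1 ∧ Y0 ω = y0) (fun ω => Z ω = z ∧ U ω = u) *
          cpr p (fun ω => D ω = d) (fun ω => Z ω = z ∧ U ω = u))
    (w : ι → ℝ)
    (hw : ∀ u, w u = cpr p (fun ω => D ω = 1) (fun ω => Z ω = 1 ∧ U ω = u) -
                    cpr p (fun ω => D ω = 1) (fun ω => Z ω = 0 ∧ U ω = u))
    (pZ : ℝ) (hpZ : pZ = prb p (fun ω => Z ω = 1)) (hpZ0 : 0 < pZ) (hpZ1 : pZ < 1)
    (κ : Ω → ℝ) (hκ : ∀ ω, κ ω = (Z ω - pZ) / (pZ * (1 - pZ)))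
    (g : ℝ → ℝ) :
    exv p (fun ω => κ ω * (1 - D ω) * g (Y ω)) = -exv p (fun ω => g (Y0 ω) * w (U ω)) ∧
    (exv p (fun ω => κ ω * D ω) ≠ 0 →
      exv p (fun ω => κ ω * g (Y ω)) / exv p (fun ω => κ ω * D ω) =
        exv p (fun ω => (g (Y1 ω) - g (Y0 ω)) * w (U ω)) / exv p (fun ω => w (U ω))) := by
  have hc0 : pZ ≠ 0 := hpZ0.ne'
  have hc1 : 1 - pZ ≠ 0 := sub_ne_zero.2 hpZ1.ne'
  have hZ0 : prb p (fun ω => Z ω = 0) = 1 - pZ := by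
    rw [hpZ, ← prb_not p hpsum]
    exact prb_congr p fun ω => by rcases hZbin ω with h | h <;> simp [h]
  have kappa_potential :=
    exv_kappa_mul_potential_eq_zero p hZbin hc0 hc1 hκ hpZ.symm hZ0 hindep
  have kappa_treated :=
    exv_kappa_mul_treated_potential p hZbin hDbin hc0 hc1 hκ hpZ.symm hZ0 hpos hindep hcind hw
  have hgY (ω : Ω) : g (Y ω) = D ω * g (Y1 ω) + (1 - D ω) * g (Y0 ω) := by
    rw [hYobs, comp_binary_mix g (hDbin ω)]
  refine ⟨?_, fun _ => ?_⟩
  · calc exv p (fun ω => κ ω * (1 - D ω) * g (Y ω))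
        = exv p (fun ω => κ ω * g (Y0 ω) - κ ω * (D ω * g (Y0 ω))) := by
          congr 1; funext ω; rw [hgY]; rcases hDbin ω with h | h <;> rw [h] <;> ring
      _ = _ := by
          rw [exv_sub, kappa_potential fun _ y0 => g y0, kappa_treated fun _ y0 => g y0, zero_sub]
  · have numerator : exv p (fun ω => κ ω * g (Y ω)) =
        exv p (fun ω => (g (Y1 ω) - g (Y0 ω)) * w (U ω)) := by
      calc exv p (fun ω => κ ω * g (Y ω))
          = exv p (fun ω => κ ω * (D ω * (g (Y1 ω) - g (Y0 ω))) + κ ω * g (Y0 ω)) := by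
            congr 1; funext ω; rw [hgY]; ring
        _ = _ := by
            rw [exv_add, kappa_potential fun _ y0 => g y0,
              kappa_treated fun y1 y0 => g y1 - g y0, add_zero]
    have denominator : exv p (fun ω => κ ω * D ω) = exv p (fun ω => w (U ω)) := by
      simpa using kappa_treated fun _ _ => 1
    rw [numerator, denominator]

/-- κ-weighting for Y(0) and the combined ratio identity. -/
theorem stmt6 {Ω ι : Type*} [Fintype Ω] [Fintype ι]
    (p : Ω → ℝ) (hp : ∀ ω, 0 ≤ p ω) (hpsum : ∑ ω, p ω = 1)
    (Z D Y Y1 Y0 : Ω → ℝ) (U : Ω → ι)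
    (hZbin : ∀ ω, Z ω = 0 ∨ Z ω = 1) (hDbin : ∀ ω, D ω = 0 ∨ D ω = 1)
    (hYobs : ∀ ω, Y ω = D ω * Y1 ω + (1 - D ω) * Y0 ω)
    (hpos : ∀ (z : ℝ) (u : ι), (z = 0 ∨ z = 1) →
      0 < prb p (fun ω => Z ω = z ∧ U ω = u))
    (hindep : ∀ (y1 y0 : ℝ) (u : ι) (z : ℝ),
      prb p (fun ω => Y1 ω = y1 ∧ Y0 ω = y0 ∧ U ω = u ∧ Z ω = z) =
        prb p (fun ω => Y1 ω = y1 ∧ Y0 ω = y0 ∧ U ω = u) * prb p (fun ω => Z ω = z))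
    (hcind : ∀ (y1 y0 d z : ℝ) (u : ι),
      cpr p (fun ω => Y1 ω = y1 ∧ Y0 ω = y0 ∧ D ω = d) (fun ω => Z ω = z ∧ U ω = u) =
        cpr p (fun ω => Y1 ω = y1 ∧ Y0 ω = y0) (fun ω => Z ω = z ∧ U ω = u) *
          cpr p (fun ω => D ω = d) (fun ω => Z ω = z ∧ U ω = u))
    (w : ι → ℝ)
    (hw : ∀ u, w u = cpr p (fun ω => D ω = 1) (fun ω => Z ω = 1 ∧ U ω = u) -
                    cpr p (fun ω => D ω = 1) (fun ω => Z ω = 0 ∧ U ω = u))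
    (pZ : ℝ) (hpZ : pZ = prb p (fun ω => Z ω = 1)) (hpZ0 : 0 < pZ) (hpZ1 : pZ < 1)
    (κ : Ω → ℝ) (hκ : ∀ ω, κ ω = (Z ω - pZ) / (pZ * (1 - pZ)))
    (g : ℝ → ℝ) :
    exv p (fun ω => κ ω * (1 - D ω) * g (Y ω)) = -exv p (fun ω => g (Y0 ω) * w (U ω)) ∧
    (exv p (fun ω => κ ω * D ω) ≠ 0 →
      exv p (fun ω => κ ω * g (Y ω)) / exv p (fun ω => κ ω * D ω) =
        exv p (fun ω => (g (Y1 ω) - g (Y0 ω)) * w (U ω)) / exv p (fun ω => w (U ω))) :=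
  stmt6_general p hpsum Z D Y Y1 Y0 U hZbin hDbin hYobs hpos hindep hcind w hw pZ hpZ hpZ0 hpZ1 κ hκ
    g
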